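/- (Theorem 2, local stability of the endemic steady state.) If R₀ > 1, then every eigenvalue of the Jacobian matrix of the SEIAR system evaluated at the endemic steady state (S*, E*, I*, A*, R*) has negative real part, where S* = N/R₀, E* = (Nμ/(k+μ))(1 − 1/R₀), I* = (Nk(1−q)μ/((γ_I+μ)(k+μ)))(1 − 1/R₀), A* = (Nkqμ/((γ_A+μ)(k+μ)))(1 − 1/R₀), R* = (Nk(qγ_Aμ + γ_I(γ_A + μ − qμ))/((γ_I+μ)(γ_A+μ)(k+μ)))(1 − 1/R₀). -/

import Mathlib

open Matrix Polynomial

/-!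
At the endemic state the Jacobian has the eigenvalue `-μ` (the `R` equation decouples) and its
other eigenvalues are the roots `z` of
`(z + k + μ)(z + c + μ)(z + γI + μ)(z + γA + μ) = (z + μ)(pI (z + γA + μ) + pA (z + γI + μ))`,
where `c = βI I* + βA A* = μ (R₀ - 1) > 0` and `pI = k(1-q)βI S*`, `pA = kqβA S*`.
Since `S* R₀ = N`, the weights satisfy `pI / (γI + μ) + pA / (γA + μ) = k + μ`. If `Re z ≥ 0`,
each factor `z + a` with `a ≥ 0` has modulus at least `a`, and `|z + μ| < |z + c + μ|`; so the
right side is strictly smaller in modulus than the left, and no such root exists.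
-/

noncomputable def seiarR0 (N μ βI βA k γI γA q : ℝ) : ℝ :=
  βI * N * k * (1 - q) / ((k + μ) * (γI + μ)) + βA * N * k * q / ((k + μ) * (γA + μ))

def seiarField (N μ βI βA k γI γA q : ℝ) (x : Fin 5 → ℝ) : Fin 5 → ℝ :=
  ![μ * N - βI * x 0 * x 2 - βA * x 0 * x 3 - μ * x 0,
    βI * x 0 * x 2 + βA * x 0 * x 3 - (k + μ) * x 1,
    k * (1 - q) * x 1 - (γI + μ) * x 2,
    k * q * x 1 - (γA + μ) * x 3,
    γI * x 2 + γA * x 3 - μ * x 4]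

def seiarJacobian (μ βI βA k γI γA q : ℝ) (x : Fin 5 → ℝ) : Matrix (Fin 5) (Fin 5) ℝ :=
  !![-(βI * x 2 + βA * x 3) - μ, 0, -(βI * x 0), -(βA * x 0), 0;
     βI * x 2 + βA * x 3, -(k + μ), βI * x 0, βA * x 0, 0;
     0, k * (1 - q), -(γI + μ), 0, 0;
     0, k * q, 0, -(γA + μ), 0;
     0, 0, γI, γA, -μ]

theorem Matrix.of_fderiv_apply_single {𝕜 m n : Type*} [NontriviallyNormedField 𝕜]
    [CompleteSpace 𝕜] [Fintype n] [DecidableEq n] {f : (n → 𝕜) → m → 𝕜} {M : Matrix m n 𝕜}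
    {x : n → 𝕜} (hf : HasFDerivAt f (LinearMap.toContinuousLinearMap (Matrix.toLin' M)) x) :
    Matrix.of (fun i j => fderiv 𝕜 (fun y => f y i) x (Pi.single j 1)) = M := by
  ext i j
  rw [Matrix.of_apply, (hasFDerivAt_pi'.1 hf i).fderiv]
  simp

theorem hasFDerivAt_seiarField (N μ βI βA k γI γA q : ℝ) (x : Fin 5 → ℝ) :
    HasFDerivAt (seiarField N μ βI βA k γI γA q)
      (LinearMap.toContinuousLinearMap (Matrix.toLin' (seiarJacobian μ βI βA k γI γA q x))) x := by
  have h i := hasFDerivAt_apply (𝕜 := ℝ) i x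
  refine hasFDerivAt_pi'.2 fun i => ?_
  fin_cases i <;> [
    refine ((((hasFDerivAt_const (μ * N) x).sub (((h 0).const_mul βI).mul (h 2))).sub
      (((h 0).const_mul βA).mul (h 3))).sub ((h 0).const_mul μ)).congr_fderiv ?_;
    refine (((((h 0).const_mul βI).mul (h 2)).add (((h 0).const_mul βA).mul (h 3))).sub
      ((h 1).const_mul (k + μ))).congr_fderiv ?_;
    refine (((h 1).const_mul (k * (1 - q))).sub ((h 2).const_mul (γI + μ))).congr_fderiv ?_;
    refine (((h 1).const_mul (k * q)).sub ((h 3).const_mul (γA + μ))).congr_fderiv ?_;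
    refine ((((h 2).const_mul γI).add ((h 3).const_mul γA)).sub
      ((h 4).const_mul μ)).congr_fderiv ?_] <;>
  · ext v
    simp only [ContinuousLinearMap.comp_apply, _root_.sub_apply, _root_.add_apply,
      _root_.smul_apply, ContinuousLinearMap.proj_apply, smul_eq_mul,
      LinearMap.coe_toContinuousLinearMap', toLin'_apply, seiarJacobian, cons_mulVec, empty_mulVec,
      dotProduct, Fin.sum_univ_five, cons_val_zero, cons_val_one, cons_val, Fin.zero_eta, Fin.mk_one,
      Fin.reduceFinMk, _root_.zero_apply]
    ring

theorem det_scalar_sub_seiarJacobian (μ βI βA k γI γA q : ℝ) (x : Fin 5 → ℝ) (z : ℂ) :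
    (scalar (Fin 5) z - (seiarJacobian μ βI βA k γI γA q x).map Complex.ofReal).det =
      (z + μ) * ((z + ↑(k + μ)) * (z + ↑(βI * x 2 + βA * x 3 + μ)) * (z + ↑(γI + μ)) *
          (z + ↑(γA + μ)) -
        (z + μ) * (↑(k * (1 - q) * (βI * x 0)) * (z + ↑(γA + μ)) +
          ↑(k * q * (βA * x 0)) * (z + ↑(γI + μ)))) := by
  simp [det_succ_row_zero, Fin.sum_univ_succ, seiarJacobian, Fin.succAbove]
  ring

namespace Complex

theorem le_norm_add_ofReal {z : ℂ} (hz : 0 ≤ z.re) (a : ℝ) : a ≤ ‖z + a‖ :=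
  calc a ≤ (z + a).re := by simp only [add_re, ofReal_re]; linarith
    _ ≤ ‖z + a‖ := re_le_norm _

theorem norm_lt_norm_add_ofReal {w : ℂ} {c : ℝ} (hw : 0 ≤ w.re) (hc : 0 < c) :
    ‖w‖ < ‖w + c‖ := by
  have hsq : ‖w‖ ^ 2 < ‖w + c‖ ^ 2 := by
    simp only [Complex.sq_norm, normSq_apply, add_re, add_im, ofReal_re, ofReal_im, add_zero]
    nlinarith
  exact lt_of_pow_lt_pow_left₀ 2 (norm_nonneg _) hsq

end Complex

open Complex in
theorem seiar_char_eq_ne_of_re_nonneg {K c μ gI gA pI pA : ℝ} {z : ℂ} (hz : 0 ≤ z.re)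
    (hK : 0 < K) (hc : 0 < c) (hμ : 0 ≤ μ) (hgI : 0 < gI) (hgA : 0 < gA)
    (hpI : 0 ≤ pI) (hpA : 0 ≤ pA) (hp : pI * gA + pA * gI ≤ K * gI * gA) :
    (z + K) * (z + ↑(c + μ)) * (z + gI) * (z + gA) ≠
      (z + μ) * (pI * (z + gA) + pA * (z + gI)) := by
  intro h
  have hI := le_norm_add_ofReal hz gI
  have hA := le_norm_add_ofReal hz gA
  have hcμ : ‖z + μ‖ < ‖z + ↑(c + μ)‖ := by
    rw [ofReal_add, add_comm (c : ℂ), ← add_assoc]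
    exact norm_lt_norm_add_ofReal (by simpa using add_nonneg hz hμ) hc
  -- `pI / b + pA / a` is decreasing in `a` and `b`, and is at most `K` at `a = gA`, `b = gI`
  have hweights : pI * ‖z + gA‖ + pA * ‖z + gI‖ ≤ K * ‖z + gI‖ * ‖z + gA‖ := by
    have := mul_le_mul_of_nonneg_left hI (by positivity : 0 ≤ pI * ‖z + gA‖ * gA)
    have := mul_le_mul_of_nonneg_left hA (by positivity : 0 ≤ pA * ‖z + gI‖ * gI)
    have := mul_le_mul_of_nonneg_left hp (by positivity : 0 ≤ ‖z + gI‖ * ‖z + gA‖)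
    refine le_of_mul_le_mul_right ?_ (mul_pos hgI hgA)
    nlinarith
  have hrhs : ‖pI * (z + gA) + pA * (z + gI)‖ ≤ K * ‖z + gI‖ * ‖z + gA‖ := by
    refine (norm_add_le _ _).trans ?_
    simpa [abs_of_nonneg hpI, abs_of_nonneg hpA] using hweights
  have hpos : 0 < K * ‖z + gI‖ * ‖z + gA‖ := by
    have := hgI.trans_le hI
    have := hgA.trans_le hA
    positivity
  have hK' := le_norm_add_ofReal hz K
  have hnorm := congrArg norm h
  simp only [norm_mul] at hnorm
  have : ‖z + μ‖ * ‖pI * (z + gA) + pA * (z + gI)‖ <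
      ‖z + K‖ * ‖z + ↑(c + μ)‖ * ‖z + gI‖ * ‖z + gA‖ :=
    calc ‖z + μ‖ * ‖pI * (z + gA) + pA * (z + gI)‖
        ≤ ‖z + μ‖ * (K * ‖z + gI‖ * ‖z + gA‖) := by gcongr
      _ < ‖z + ↑(c + μ)‖ * (K * ‖z + gI‖ * ‖z + gA‖) := by gcongr
      _ ≤ ‖z + K‖ * ‖z + ↑(c + μ)‖ * ‖z + gI‖ * ‖z + gA‖ := by
        nlinarith [mul_le_mul_of_nonneg_right hK'
          (by positivity : 0 ≤ ‖z + ↑(c + μ)‖ * ‖z + gI‖ * ‖z + gA‖)]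
  exact this.ne hnorm.symm

theorem seiarR0_eq_mul (N μ βI βA k γI γA q : ℝ) :
    seiarR0 N μ βI βA k γI γA q = N * seiarR0 1 μ βI βA k γI γA q := by
  unfold seiarR0
  ring

theorem seiarR0_div_self {N μ βI βA k γI γA q : ℝ} (h : seiarR0 N μ βI βA k γI γA q ≠ 0) :
    seiarR0 (N / seiarR0 N μ βI βA k γI γA q) μ βI βA k γI γA q = 1 := by
  rw [seiarR0_eq_mul (N / _), div_mul_eq_mul_div, ← seiarR0_eq_mul, div_self h]

theorem re_neg_of_mem_spectrum_seiarJacobian {μ βI βA k γI γA q : ℝ} {x : Fin 5 → ℝ}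
    (hμ : 0 < μ) (hk : 0 < k) (hγI : 0 < γI) (hγA : 0 < γA) (hβI : 0 ≤ βI) (hβA : 0 ≤ βA)
    (hq0 : 0 ≤ q) (hq1 : q ≤ 1) (hS : 0 ≤ x 0) (hc : 0 < βI * x 2 + βA * x 3)
    (hR : seiarR0 (x 0) μ βI βA k γI γA q ≤ 1) {z : ℂ}
    (hz : z ∈ spectrum ℂ ((seiarJacobian μ βI βA k γI γA q x).map Complex.ofReal)) :
    z.re < 0 := by
  by_contra! hre
  rw [mem_spectrum_iff_isRoot_charpoly, IsRoot.def, eval_charpoly,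
    det_scalar_sub_seiarJacobian, mul_eq_zero, sub_eq_zero] at hz
  rcases hz with hz | hz
  · have := congrArg Complex.re hz
    simp only [Complex.add_re, Complex.ofReal_re, Complex.zero_re] at this
    linarith
  · refine seiar_char_eq_ne_of_re_nonneg (K := k + μ) (gI := γI + μ) (gA := γA + μ) hre
      (by positivity) hc hμ.le (by positivity) (by positivity) ?_ ?_ ?_ (by exact_mod_cast hz)
    · have := sub_nonneg.2 hq1
      positivity
    · positivity
    · have hR' : seiarR0 (x 0) μ βI βA k γI γA q =
          (k * (1 - q) * (βI * x 0) * (γA + μ) + k * q * (βA * x 0) * (γI + μ)) /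
            ((k + μ) * (γI + μ) * (γA + μ)) := by
        unfold seiarR0
        field_simp
      rwa [hR', div_le_one (by positivity)] at hR

theorem seiar_endemic_force_of_infection {N μ βI βA k γI γA q R₀ : ℝ} (hμ : 0 < μ) (hk : 0 < k)
    (hγI : 0 < γI) (hγA : 0 < γA) (hR₀ : R₀ = seiarR0 N μ βI βA k γI γA q) (hR₀0 : R₀ ≠ 0) :
    βI * (N * k * (1 - q) * μ / ((γI + μ) * (k + μ)) * (1 - 1 / R₀)) +
      βA * (N * k * q * μ / ((γA + μ) * (k + μ)) * (1 - 1 / R₀)) = μ * (R₀ - 1) := by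
  have hμR₀ : βI * (N * k * (1 - q) * μ / ((γI + μ) * (k + μ))) +
      βA * (N * k * q * μ / ((γA + μ) * (k + μ))) = μ * R₀ := by
    rw [hR₀, seiarR0]
    field_simp
  calc _ = (βI * (N * k * (1 - q) * μ / ((γI + μ) * (k + μ))) +
        βA * (N * k * q * μ / ((γA + μ) * (k + μ)))) * (1 - 1 / R₀) := by ring
    _ = μ * (R₀ - 1) := by
      rw [hμR₀]
      field_simp

theorem seiar_endemic_locally_stable_general
    (N μ βI βA k γI γA q : ℝ)
    (hN : 0 < N) (hμ : 0 < μ) (hβI : 0 < βI) (hβA : 0 < βA)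
    (hk : 0 < k) (hγI : 0 < γI) (hγA : 0 < γA)
    (hq0 : 0 ≤ q) (hq1 : q ≤ 1)
    (R₀ : ℝ)
    (hR₀ : R₀ = βI * N * k * (1 - q) / ((k + μ) * (γI + μ))
              + βA * N * k * q / ((k + μ) * (γA + μ)))
    (hR₀gt : 1 < R₀)
    (Sstar Estar Istar Astar Rstar : ℝ)
    (hSstar : Sstar = N / R₀)
    (hIstar : Istar = N * k * (1 - q) * μ / ((γI + μ) * (k + μ)) * (1 - 1 / R₀))
    (hAstar : Astar = N * k * q * μ / ((γA + μ) * (k + μ)) * (1 - 1 / R₀))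
    (F : (Fin 5 → ℝ) → Fin 5 → ℝ)
    (hF : F = fun x => ![μ * N - βI * x 0 * x 2 - βA * x 0 * x 3 - μ * x 0,
                         βI * x 0 * x 2 + βA * x 0 * x 3 - (k + μ) * x 1,
                         k * (1 - q) * x 1 - (γI + μ) * x 2,
                         k * q * x 1 - (γA + μ) * x 3,
                         γI * x 2 + γA * x 3 - μ * x 4])
    (x₀ : Fin 5 → ℝ) (hx₀ : x₀ = ![Sstar, Estar, Istar, Astar, Rstar])
    (J : Matrix (Fin 5) (Fin 5) ℝ)
    (hJ : J = Matrix.of fun i j => fderiv ℝ (fun x => F x i) x₀ (Pi.single j 1)) :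
    ∀ z : ℂ, z ∈ spectrum ℂ (J.map Complex.ofReal) → z.re < 0 := by
  intro z hz
  replace hR₀ : R₀ = seiarR0 N μ βI βA k γI γA q := hR₀
  have hR₀0 : R₀ ≠ 0 := (one_pos.trans hR₀gt).ne'
  have hJac : J = seiarJacobian μ βI βA k γI γA q x₀ := by
    subst hJ hF
    exact Matrix.of_fderiv_apply_single (hasFDerivAt_seiarField N μ βI βA k γI γA q x₀)
  subst hJac hx₀
  refine re_neg_of_mem_spectrum_seiarJacobian hμ hk hγI hγA hβI.le hβA.le hq0 hq1 ?_ ?_ ?_ hz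
  · change 0 ≤ Sstar
    rw [hSstar]
    positivity
  · change 0 < βI * Istar + βA * Astar
    rw [hIstar, hAstar, seiar_endemic_force_of_infection hμ hk hγI hγA hR₀ hR₀0]
    exact mul_pos hμ (sub_pos.2 hR₀gt)
  · change seiarR0 Sstar μ βI βA k γI γA q ≤ 1
    rw [hSstar, hR₀, seiarR0_div_self (hR₀ ▸ hR₀0)]

/-- Local stability of the endemic steady state: if `R₀ > 1`, every eigenvalue of the
Jacobian of the SEIAR system at the endemic steady state `(S*, E*, I*, A*, R*)` has
negative real part. -/
theorem seiar_endemic_locally_stable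
    (N μ βI βA k γI γA q : ℝ)
    (hN : 0 < N) (hμ : 0 < μ) (hβI : 0 < βI) (hβA : 0 < βA)
    (hk : 0 < k) (hγI : 0 < γI) (hγA : 0 < γA)
    (hq0 : 0 ≤ q) (hq1 : q ≤ 1)
    (R₀ : ℝ)
    (hR₀ : R₀ = βI * N * k * (1 - q) / ((k + μ) * (γI + μ))
              + βA * N * k * q / ((k + μ) * (γA + μ)))
    (hR₀gt : 1 < R₀)
    (Sstar Estar Istar Astar Rstar : ℝ)
    (hSstar : Sstar = N / R₀)
    (hEstar : Estar = N * μ / (k + μ) * (1 - 1 / R₀))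
    (hIstar : Istar = N * k * (1 - q) * μ / ((γI + μ) * (k + μ)) * (1 - 1 / R₀))
    (hAstar : Astar = N * k * q * μ / ((γA + μ) * (k + μ)) * (1 - 1 / R₀))
    (hRstar : Rstar = N * k * (q * γA * μ + γI * (γA + μ - q * μ))
        / ((γI + μ) * (γA + μ) * (k + μ)) * (1 - 1 / R₀))
    (F : (Fin 5 → ℝ) → Fin 5 → ℝ)
    (hF : F = fun x => ![μ * N - βI * x 0 * x 2 - βA * x 0 * x 3 - μ * x 0,
                         βI * x 0 * x 2 + βA * x 0 * x 3 - (k + μ) * x 1,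
                         k * (1 - q) * x 1 - (γI + μ) * x 2,
                         k * q * x 1 - (γA + μ) * x 3,
                         γI * x 2 + γA * x 3 - μ * x 4])
    (x₀ : Fin 5 → ℝ) (hx₀ : x₀ = ![Sstar, Estar, Istar, Astar, Rstar])
    (J : Matrix (Fin 5) (Fin 5) ℝ)
    (hJ : J = Matrix.of fun i j => fderiv ℝ (fun x => F x i) x₀ (Pi.single j 1)) :
    ∀ z : ℂ, z ∈ spectrum ℂ (J.map Complex.ofReal) → z.re < 0 :=
  seiar_endemic_locally_stable_general N μ βI βA k γI γA q hN hμ hβI hβA hk hγI hγA hq0 hq1 R₀ hR₀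
    hR₀gt Sstar Estar Istar Astar Rstar hSstar hIstar hAstar F hF x₀ hx₀ J hJ
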